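/- arXiv:2401.06565 — 4 statements merged into one kernel-verified Lean document; each statement's English description precedes it below -/
import Mathlib

section
/- There exists a constant C > 0 such that for every real β with 0 < β ≤ 1/4 and every t ≥ 0, the solutions A₀(·;β) and A₁(·;β) of the ODE u'' + u' + β²u = 0 on [0,∞) with initial data (u(0),u'(0)) = (1,0) and (0,1), respectively, satisfy |A₀(t;β)| ≤ C(β²·e^{−t/2} + e^{−β²t}) and |A₁(t;β)| ≤ C(e^{−t/2} + e^{−β²t}). -/
/-!
For `0 < β ≤ 1/4` the characteristic polynomial `X² + X + β²` has two real roots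
`a = (-1 + √(1 - 4β²))/2 ∈ [-2β², -β²]` and `b = (-1 - √(1 - 4β²))/2 ∈ [-1, -1/2]`, with
`a - b ≥ 1/2`. By uniqueness for the first-order companion system,
`A₀ = (-b e^{at} + a e^{bt})/(a - b)` and `A₁ = (e^{at} - e^{bt})/(a - b)`; the bounds on the roots
turn `e^{at}` into `e^{-β²t}`, `e^{bt}` into `e^{-t/2}`, and give the factor `β²` from the
coefficient `a/(a - b)` of `A₀`.
-/

open Set Real

section SecondOrder

variable {p q : ℝ}

noncomputable def companionCLM (p q : ℝ) : ℝ × ℝ →L[ℝ] ℝ × ℝ :=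
  (ContinuousLinearMap.snd ℝ ℝ ℝ).prod
    (-(p • ContinuousLinearMap.snd ℝ ℝ ℝ) - q • ContinuousLinearMap.fst ℝ ℝ ℝ)

@[simp]
lemma companionCLM_apply (x : ℝ × ℝ) : companionCLM p q x = (x.2, -(p * x.2) - q * x.1) := by
  simp [companionCLM]

lemma HasDerivWithinAt.prodMk_companion {u u' : ℝ → ℝ} {u'' t : ℝ} {s : Set ℝ}
    (hu : HasDerivWithinAt u (u' t) s t) (hu' : HasDerivWithinAt u' u'' s t)
    (hode : u'' + p * u' t + q * u t = 0) :
    HasDerivWithinAt (fun t ↦ (u t, u' t)) (companionCLM p q (u t, u' t)) s t := by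
  convert hu.prodMk hu' using 1
  simp only [companionCLM_apply, Prod.mk.injEq, true_and]
  linarith

theorem eqOn_Ici_of_secondOrder {u u' u'' v v' v'' : ℝ → ℝ}
    (hu : ∀ t ∈ Ici (0 : ℝ), HasDerivWithinAt u (u' t) (Ici 0) t)
    (hu' : ∀ t ∈ Ici (0 : ℝ), HasDerivWithinAt u' (u'' t) (Ici 0) t)
    (hu'' : ∀ t ∈ Ici (0 : ℝ), u'' t + p * u' t + q * u t = 0)
    (hv : ∀ t ∈ Ici (0 : ℝ), HasDerivWithinAt v (v' t) (Ici 0) t)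
    (hv' : ∀ t ∈ Ici (0 : ℝ), HasDerivWithinAt v' (v'' t) (Ici 0) t)
    (hv'' : ∀ t ∈ Ici (0 : ℝ), v'' t + p * v' t + q * v t = 0)
    (h₀ : u 0 = v 0) (h₀' : u' 0 = v' 0) :
    EqOn u v (Ici 0) := by
  intro t ht
  have hcont {w w' w'' : ℝ → ℝ} (hw : ∀ t ∈ Ici (0 : ℝ), HasDerivWithinAt w (w' t) (Ici 0) t)
      (hw' : ∀ t ∈ Ici (0 : ℝ), HasDerivWithinAt w' (w'' t) (Ici 0) t) :
      ContinuousOn (fun s ↦ (w s, w' s)) (Icc 0 t) :=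
    (ContinuousOn.prodMk (fun s hs ↦ (hw s hs).continuousWithinAt)
      (fun s hs ↦ (hw' s hs).continuousWithinAt)).mono Icc_subset_Ici_self
  have hderiv {w w' w'' : ℝ → ℝ} (hw : ∀ t ∈ Ici (0 : ℝ), HasDerivWithinAt w (w' t) (Ici 0) t)
      (hw' : ∀ t ∈ Ici (0 : ℝ), HasDerivWithinAt w' (w'' t) (Ici 0) t)
      (hw'' : ∀ t ∈ Ici (0 : ℝ), w'' t + p * w' t + q * w t = 0) (s : ℝ) (hs : s ∈ Ico 0 t) :
      HasDerivWithinAt (fun s ↦ (w s, w' s)) (companionCLM p q (w s, w' s)) (Ici s) s :=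
    have hsub : Ici s ⊆ Ici 0 := Ici_subset_Ici.2 hs.1
    ((hw s hs.1).mono hsub).prodMk_companion ((hw' s hs.1).mono hsub) (hw'' s hs.1)
  have := ODE_solution_unique (v := fun _ ↦ companionCLM p q)
    (fun _ ↦ (companionCLM p q).lipschitz) (hcont hu hu') (hderiv hu hu' hu'')
    (hcont hv hv') (hderiv hv hv' hv'') (Prod.ext h₀ h₀') ⟨ht, le_rfl⟩
  exact congrArg Prod.fst this

lemma hasDerivAt_expCombination (α γ r s t : ℝ) :
    HasDerivAt (fun t ↦ α * exp (r * t) + γ * exp (s * t))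
      (α * r * exp (r * t) + γ * s * exp (s * t)) t := by
  have hexp (c : ℝ) : HasDerivAt (fun t ↦ exp (c * t)) (exp (c * t) * c) t := by
    simpa using ((hasDerivAt_id t).const_mul c).exp
  exact (((hexp r).const_mul α).add ((hexp s).const_mul γ)).congr_deriv (by ring)

theorem eq_expCombination_of_secondOrder {r s α γ : ℝ} (hr : r ^ 2 + p * r + q = 0)
    (hs : s ^ 2 + p * s + q = 0) {u u' u'' : ℝ → ℝ}
    (hu : ∀ t ∈ Ici (0 : ℝ), HasDerivWithinAt u (u' t) (Ici 0) t)
    (hu' : ∀ t ∈ Ici (0 : ℝ), HasDerivWithinAt u' (u'' t) (Ici 0) t)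
    (hu'' : ∀ t ∈ Ici (0 : ℝ), u'' t + p * u' t + q * u t = 0)
    (h₀ : u 0 = α + γ) (h₀' : u' 0 = α * r + γ * s) {t : ℝ} (ht : 0 ≤ t) :
    u t = α * exp (r * t) + γ * exp (s * t) := by
  refine eqOn_Ici_of_secondOrder hu hu' hu''
    (fun t _ ↦ (hasDerivAt_expCombination α γ r s t).hasDerivWithinAt)
    (fun t _ ↦ (hasDerivAt_expCombination (α * r) (γ * s) r s t).hasDerivWithinAt)
    (fun t _ ↦ ?_) (by simpa using h₀) (by simpa using h₀') ht
  linear_combination α * exp (r * t) * hr + γ * exp (s * t) * hs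

end SecondOrder

lemma abs_expCombination_le {α γ A G x x' y y' : ℝ} (hα : |α| ≤ A) (hγ : |γ| ≤ G)
    (hx : x ≤ x') (hy : y ≤ y') :
    |α * exp x + γ * exp y| ≤ A * exp x' + G * exp y' :=
  calc |α * exp x + γ * exp y| ≤ |α| * exp x + |γ| * exp y := by
        simpa only [abs_mul, abs_exp] using abs_add_le (α * exp x) (γ * exp y)
    _ ≤ A * exp x' + G * exp y' := by gcongr <;> linarith [abs_nonneg α, abs_nonneg γ]

lemma abs_div_le_two_mul {x d : ℝ} (hd : 1 / 2 ≤ d) : |x / d| ≤ 2 * |x| := by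
  rw [abs_div, abs_of_pos (by linarith : 0 < d), div_le_iff₀ (by linarith)]
  nlinarith [abs_nonneg x]

lemma exists_roots_of_le_quarter {β : ℝ} (hβ : |β| ≤ 1 / 4) :
    ∃ a b : ℝ, a + b = -1 ∧ a * b = β ^ 2 ∧ 1 / 2 ≤ a - b := by
  have hβ2 : β ^ 2 ≤ 1 / 16 := by nlinarith [sq_abs β, abs_nonneg β]
  have hdisc : 0 ≤ 1 - 4 * β ^ 2 := by linarith
  refine ⟨(-1 + √(1 - 4 * β ^ 2)) / 2, (-1 - √(1 - 4 * β ^ 2)) / 2, by ring, ?_, ?_⟩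
  · linear_combination (-1 / 4 : ℝ) * sq_sqrt hdisc
  · have : 1 / 2 ≤ √(1 - 4 * β ^ 2) := le_sqrt_of_sq_le (by linarith)
    linarith

lemma root_bounds_of_vieta {a b β : ℝ} (hsum : a + b = -1) (hprod : a * b = β ^ 2)
    (hgap : 1 / 2 ≤ a - b) : -(2 * β ^ 2) ≤ a ∧ a ≤ -β ^ 2 ∧ -1 ≤ b ∧ b ≤ -1 / 2 := by
  have hb : b ≤ -3 / 4 := by linarith
  have ha : a ≤ 0 := by nlinarith [sq_nonneg β]
  exact ⟨by nlinarith, by nlinarith, by linarith, by linarith⟩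

/-- Low-frequency pointwise estimates for the fundamental solutions `A₀, A₁`
of the damped oscillator equation `u'' + u' + β²u = 0` on `[0, ∞)` with data
`(1,0)` and `(0,1)`, uniformly in `0 < β ≤ 1/4`. -/
theorem stmt_5 :
    ∃ C : ℝ, 0 < C ∧
      ∀ β : ℝ, 0 < β → β ≤ 1/4 →
      ∀ A₀ A₀' A₀'' A₁ A₁' A₁'' : ℝ → ℝ,
      (∀ t ∈ Set.Ici (0 : ℝ), HasDerivWithinAt A₀ (A₀' t) (Set.Ici 0) t) →
      (∀ t ∈ Set.Ici (0 : ℝ), HasDerivWithinAt A₀' (A₀'' t) (Set.Ici 0) t) →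
      (∀ t ∈ Set.Ici (0 : ℝ), A₀'' t + A₀' t + β^2 * A₀ t = 0) →
      A₀ 0 = 1 → A₀' 0 = 0 →
      (∀ t ∈ Set.Ici (0 : ℝ), HasDerivWithinAt A₁ (A₁' t) (Set.Ici 0) t) →
      (∀ t ∈ Set.Ici (0 : ℝ), HasDerivWithinAt A₁' (A₁'' t) (Set.Ici 0) t) →
      (∀ t ∈ Set.Ici (0 : ℝ), A₁'' t + A₁' t + β^2 * A₁ t = 0) →
      A₁ 0 = 0 → A₁' 0 = 1 →
      ∀ t : ℝ, 0 ≤ t →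
        |A₀ t| ≤ C * (β^2 * Real.exp (-t/2) + Real.exp (-(β^2 * t))) ∧
        |A₁ t| ≤ C * (Real.exp (-t/2) + Real.exp (-(β^2 * t))) := by
  refine ⟨4, by norm_num, fun β hβ hβ' A₀ A₀' A₀'' A₁ A₁' A₁'' hA₀ hA₀' hA₀'' h₀ h₀'
    hA₁ hA₁' hA₁'' h₁ h₁' t ht ↦ ?_⟩
  obtain ⟨a, b, hsum, hprod, hgap⟩ := exists_roots_of_le_quarter (abs_le.2 ⟨by linarith, hβ'⟩)
  obtain ⟨ha, ha', hb, hb'⟩ := root_bounds_of_vieta hsum hprod hgap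
  have hra : a ^ 2 + 1 * a + β ^ 2 = 0 := by linear_combination a * hsum - hprod
  have hrb : b ^ 2 + 1 * b + β ^ 2 = 0 := by linear_combination b * hsum - hprod
  have hat : a * t ≤ -(β ^ 2 * t) := by nlinarith
  have hbt : b * t ≤ -t / 2 := by nlinarith
  have hA₀t : A₀ t = -b / (a - b) * exp (a * t) + a / (a - b) * exp (b * t) :=
    eq_expCombination_of_secondOrder hra hrb hA₀ hA₀' (by simpa using hA₀'')
      (by rw [h₀]; field_simp; ring) (by rw [h₀']; field_simp; ring) ht
  have hA₁t : A₁ t = 1 / (a - b) * exp (a * t) + -1 / (a - b) * exp (b * t) :=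
    eq_expCombination_of_secondOrder hra hrb hA₁ hA₁' (by simpa using hA₁'')
      (by rw [h₁]; ring) (by rw [h₁']; field_simp; ring) ht
  have h₀a : |-b / (a - b)| ≤ 2 :=
    (abs_div_le_two_mul hgap).trans (by rw [abs_of_nonneg (by linarith)]; linarith)
  have h₀b : |a / (a - b)| ≤ 4 * β ^ 2 :=
    (abs_div_le_two_mul hgap).trans (by rw [abs_of_nonpos (by linarith)]; linarith)
  have h₁a : |1 / (a - b)| ≤ 2 := (abs_div_le_two_mul hgap).trans (by simp)
  have h₁b : |-1 / (a - b)| ≤ 2 := (abs_div_le_two_mul hgap).trans (by simp)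
  have hexp := exp_pos (-(β ^ 2 * t))
  constructor
  · rw [hA₀t]
    linarith [abs_expCombination_le h₀a h₀b hat hbt]
  · rw [hA₁t]
    linarith [abs_expCombination_le h₁a h₁b hat hbt, exp_pos (-t / 2)]
end

section
/- There exists a constant C > 0 such that for every real β ≥ 1 and every t ≥ 0, the solutions A₀(·;β) and A₁(·;β) of the ODE u'' + u' + β²u = 0 on [0,∞) with initial data (u(0),u'(0)) = (1,0) and (0,1), respectively, satisfy |A₀(t;β)| ≤ C·e^{−t/2} and |A₁(t;β)| ≤ C·β^{−1}·e^{−t/2}. -/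
/-! The energy `E = u'² + u u' + β² u²` of a solution of `u'' + u' + β² u = 0` satisfies
`E' = -E`, hence `E(t) = e^{-t} E(0)`. Completing the square, `E ≥ (β² - 1/4) u² ≥ β² u² / 4`
once `β ≥ 1`, so `|u(t)| ≤ 2 β⁻¹ √(E(0)) e^{-t/2}`; the data `(1,0)` and `(0,1)` give
`E(0) = β²` and `E(0) = 1`. -/

open Set Real

def dampedEnergy (β x v : ℝ) : ℝ := v ^ 2 + x * v + β ^ 2 * x ^ 2

lemma sq_mul_le_dampedEnergy (β x v : ℝ) : (β ^ 2 - 1 / 4) * x ^ 2 ≤ dampedEnergy β x v := by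
  unfold dampedEnergy
  nlinarith [sq_nonneg (v + x / 2)]

section DampedOscillator

variable {β : ℝ} {u u' u'' : ℝ → ℝ}

lemma hasDerivWithinAt_dampedEnergy {s : Set ℝ} {t : ℝ}
    (hu : HasDerivWithinAt u (u' t) s t) (hu' : HasDerivWithinAt u' (u'' t) s t)
    (heq : u'' t + u' t + β ^ 2 * u t = 0) :
    HasDerivWithinAt (fun r => dampedEnergy β (u r) (u' r))
      (-dampedEnergy β (u t) (u' t)) s t := by
  have hE := ((hu'.pow 2).add (hu.mul hu')).add ((hu.pow 2).const_mul (β ^ 2))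
  refine hE.congr_deriv ?_
  have hu''t : u'' t = -u' t - β ^ 2 * u t := by linarith
  simp only [dampedEnergy, hu''t]
  ring

lemma dampedEnergy_eq_exp_neg_mul
    (hu : ∀ t ∈ Ici (0 : ℝ), HasDerivWithinAt u (u' t) (Ici 0) t)
    (hu' : ∀ t ∈ Ici (0 : ℝ), HasDerivWithinAt u' (u'' t) (Ici 0) t)
    (heq : ∀ t ∈ Ici (0 : ℝ), u'' t + u' t + β ^ 2 * u t = 0) {t : ℝ} (ht : 0 ≤ t) :
    dampedEnergy β (u t) (u' t) = exp (-t) * dampedEnergy β (u 0) (u' 0) := by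
  set g : ℝ → ℝ := fun r => exp r * dampedEnergy β (u r) (u' r)
  have hg : ∀ r ∈ Ici (0 : ℝ), HasDerivWithinAt g 0 (Ici 0) r := fun r hr =>
    ((hasDerivAt_exp r).hasDerivWithinAt.mul
      (hasDerivWithinAt_dampedEnergy (hu r hr) (hu' r hr) (heq r hr))).congr_deriv (by ring)
  have hconst : g t = g 0 :=
    constant_of_has_deriv_right_zero (fun r hr => (hg r hr.1).continuousWithinAt.mono Icc_subset_Ici_self)
      (fun r hr => (hg r hr.1).mono (Ici_subset_Ici.mpr hr.1)) t ⟨ht, le_rfl⟩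
  simp only [g, exp_zero, one_mul] at hconst
  rw [← hconst, ← mul_assoc, ← exp_add, neg_add_cancel, exp_zero, one_mul]

lemma abs_le_of_dampedOscillator (hβ : 1 ≤ β)
    (hu : ∀ t ∈ Ici (0 : ℝ), HasDerivWithinAt u (u' t) (Ici 0) t)
    (hu' : ∀ t ∈ Ici (0 : ℝ), HasDerivWithinAt u' (u'' t) (Ici 0) t)
    (heq : ∀ t ∈ Ici (0 : ℝ), u'' t + u' t + β ^ 2 * u t = 0) {t : ℝ} (ht : 0 ≤ t) :
    |u t| ≤ 2 * β⁻¹ * √(dampedEnergy β (u 0) (u' 0)) * exp (-t / 2) := by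
  set E₀ := dampedEnergy β (u 0) (u' 0)
  have hβ₀ : 0 < β := by linarith
  have hE₀ : 0 ≤ E₀ :=
    (mul_nonneg (by nlinarith) (sq_nonneg _)).trans (sq_mul_le_dampedEnergy β (u 0) (u' 0))
  have hdecay : (β * u t) ^ 2 ≤ 4 * E₀ * exp (-t) := by
    have hlower : (β ^ 2 - 1 / 4) * u t ^ 2 ≤ exp (-t) * E₀ :=
      dampedEnergy_eq_exp_neg_mul hu hu' heq ht ▸ sq_mul_le_dampedEnergy β (u t) (u' t)
    nlinarith [mul_nonneg (show 0 ≤ 3 * β ^ 2 - 1 by nlinarith) (sq_nonneg (u t))]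
  have hβu : β * |u t| ≤ 2 * √E₀ * exp (-t / 2) := by
    calc β * |u t| = |β * u t| := by rw [abs_mul, abs_of_pos hβ₀]
      _ ≤ √(4 * E₀ * exp (-t)) := abs_le_sqrt hdecay
      _ = 2 * √E₀ * exp (-t / 2) := by
        rw [sqrt_mul (by positivity), sqrt_mul (by norm_num), exp_half,
          show (4 : ℝ) = 2 ^ 2 by norm_num, sqrt_sq zero_le_two]
  rw [mul_comm 2 β⁻¹, mul_assoc, mul_assoc, ← mul_assoc 2, le_inv_mul_iff₀ hβ₀]
  exact hβu

end DampedOscillator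

/-- High-frequency pointwise estimates for the fundamental solutions `A₀, A₁`
of the damped oscillator equation `u'' + u' + β²u = 0` on `[0, ∞)` with data
`(1,0)` and `(0,1)`, uniformly in `β ≥ 1`. -/
theorem stmt_6 :
    ∃ C : ℝ, 0 < C ∧
      ∀ β : ℝ, 1 ≤ β →
      ∀ A₀ A₀' A₀'' A₁ A₁' A₁'' : ℝ → ℝ,
      (∀ t ∈ Set.Ici (0 : ℝ), HasDerivWithinAt A₀ (A₀' t) (Set.Ici 0) t) →
      (∀ t ∈ Set.Ici (0 : ℝ), HasDerivWithinAt A₀' (A₀'' t) (Set.Ici 0) t) →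
      (∀ t ∈ Set.Ici (0 : ℝ), A₀'' t + A₀' t + β^2 * A₀ t = 0) →
      A₀ 0 = 1 → A₀' 0 = 0 →
      (∀ t ∈ Set.Ici (0 : ℝ), HasDerivWithinAt A₁ (A₁' t) (Set.Ici 0) t) →
      (∀ t ∈ Set.Ici (0 : ℝ), HasDerivWithinAt A₁' (A₁'' t) (Set.Ici 0) t) →
      (∀ t ∈ Set.Ici (0 : ℝ), A₁'' t + A₁' t + β^2 * A₁ t = 0) →
      A₁ 0 = 0 → A₁' 0 = 1 →
      ∀ t : ℝ, 0 ≤ t →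
        |A₀ t| ≤ C * Real.exp (-t/2) ∧
        |A₁ t| ≤ C * β⁻¹ * Real.exp (-t/2) := by
  refine ⟨2, two_pos, fun β hβ A₀ A₀' A₀'' A₁ A₁' A₁'' h₀ h₀' heq₀ hA₀ hA₀' h₁ h₁' heq₁ hA₁ hA₁' t ht =>
    ⟨?_, ?_⟩⟩
  · have hβ₀ : β ≠ 0 := by positivity
    have h := abs_le_of_dampedOscillator hβ h₀ h₀' heq₀ ht
    rwa [hA₀, hA₀', show dampedEnergy β 1 0 = β ^ 2 by simp [dampedEnergy],
      sqrt_sq (by positivity), mul_assoc 2, inv_mul_cancel₀ hβ₀, mul_one] at h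
  · have h := abs_le_of_dampedOscillator hβ h₁ h₁' heq₁ ht
    rwa [hA₁, hA₁', show dampedEnergy β 0 1 = 1 by simp [dampedEnergy], sqrt_one,
      mul_one] at h
end

section
/- Let Q > 0 and γ > 0 be real numbers, and let p > 1 satisfy: p > 1 + 4/(Q + 2γ) if γ ≤ 2, and p > 1 + 2γ/(Q + 2γ) if γ > 2. Then there exists a constant C > 0 such that for all t ≥ 0, (1+t)^{−(p−1)(γ/2 + Q/4)} · ∫₀^{t/2} (1+s)^{−γ/2} ds ≤ C·(1+t)^{−γ/2}. -/
/-- Key Duhamel estimate: under the supercritical condition on `p`, the quantity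
`(1+t)^{-(p-1)(γ/2+Q/4)} ∫₀^{t/2} (1+s)^{-γ/2} ds` is bounded by `C (1+t)^{-γ/2}`. -/
theorem stmt_10 (Q γ p : ℝ) (hQ : 0 < Q) (hγ : 0 < γ) (hp : 1 < p)
    (h1 : γ ≤ 2 → 1 + 4/(Q + 2*γ) < p)
    (h2 : 2 < γ → 1 + 2*γ/(Q + 2*γ) < p) :
    ∃ C : ℝ, 0 < C ∧ ∀ t : ℝ, 0 ≤ t →
      (1 + t) ^ (-((p - 1) * (γ/2 + Q/4))) * (∫ s in (0 : ℝ)..(t/2), (1 + s) ^ (-γ/2)) ≤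
        C * (1 + t) ^ (-γ/2) := by
  set A := (p - 1) * (γ/2 + Q/4) with hA
  have hQγ : 0 < Q + 2*γ := by linarith
  have hA1 : 1 < A := by
    rcases le_or_gt γ 2 with h | h
    · have h4 : 4/(Q+2*γ) < p - 1 := by linarith [h1 h]
      rw [div_lt_iff₀ hQγ] at h4
      nlinarith
    · have h4 : 2*γ/(Q+2*γ) < p - 1 := by linarith [h2 h]
      rw [div_lt_iff₀ hQγ] at h4
      nlinarith
  have hAγ : γ/2 < A := by
    rcases le_or_gt γ 2 with h | h
    · have h4 : 4/(Q+2*γ) < p - 1 := by linarith [h1 h]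
      rw [div_lt_iff₀ hQγ] at h4
      nlinarith
    · have h4 : 2*γ/(Q+2*γ) < p - 1 := by linarith [h2 h]
      rw [div_lt_iff₀ hQγ] at h4
      nlinarith
  set b := min (γ/2) (max (γ/2 + 1 - A) (1/2)) with hb
  have hb0 : 0 < b := lt_min (by linarith) (lt_of_lt_of_le (by norm_num) (le_max_right _ _))
  have hb1 : b < 1 := lt_of_le_of_lt (min_le_right _ _)
    (max_lt (by linarith) (by norm_num))
  have hbγ : b ≤ γ/2 := min_le_left _ _
  have hbA : γ/2 + 1 - A ≤ b := le_min (by linarith) (le_max_left _ _)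
  refine ⟨1/(1-b), div_pos one_pos (by linarith), fun t ht => ?_⟩
  have h1t : (1:ℝ) ≤ 1 + t := by linarith
  have ht2 : (0:ℝ) ≤ t/2 := by linarith
  -- continuity / integrability
  have hcont : ∀ r : ℝ, ContinuousOn (fun s : ℝ => (1 + s) ^ r) (Set.Icc 0 (t/2)) := by
    intro r
    apply ContinuousOn.rpow_const (by fun_prop)
    intro x hx
    left
    have : (0:ℝ) < 1 + x := by linarith [hx.1]
    positivity
  have hint : ∀ r : ℝ, IntervalIntegrable (fun s : ℝ => (1 + s) ^ r) MeasureTheory.volume 0 (t/2) := by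
    intro r
    apply ContinuousOn.intervalIntegrable
    rw [Set.uIcc_of_le ht2]
    exact hcont r
  -- monotone comparison of integrands
  have hmono : (∫ s in (0:ℝ)..(t/2), (1 + s) ^ (-γ/2)) ≤ ∫ s in (0:ℝ)..(t/2), (1 + s) ^ (-b) := by
    apply intervalIntegral.integral_mono_on ht2 (hint _) (hint _)
    intro s hs
    exact Real.rpow_le_rpow_of_exponent_le (by linarith [hs.1]) (by linarith)
  -- compute the second integral
  have hcomp : (∫ s in (0:ℝ)..(t/2), (1 + s) ^ (-b)) = ∫ x in (1:ℝ)..(1 + t/2), x ^ (-b) := by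
    have := intervalIntegral.integral_comp_add_left (a := (0:ℝ)) (b := t/2)
      (fun x : ℝ => x ^ (-b)) 1
    simpa using this
  have hval : (∫ x in (1:ℝ)..(1 + t/2), x ^ (-b)) = ((1 + t/2) ^ (1 - b) - 1) / (1 - b) := by
    rw [integral_rpow (Or.inl (by linarith))]
    rw [Real.one_rpow]
    ring_nf
  have hbound : (∫ s in (0:ℝ)..(t/2), (1 + s) ^ (-γ/2)) ≤ (1 + t) ^ (1 - b) / (1 - b) := by
    rw [hcomp, hval] at hmono
    refine hmono.trans ?_
    apply div_le_div_of_nonneg_right ?_ (by linarith) |>.trans_eq rfl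
    have h' : (1 + t/2) ^ (1 - b) ≤ (1 + t) ^ (1 - b) :=
      Real.rpow_le_rpow (by linarith) (by linarith) (by linarith)
    linarith
  calc (1 + t) ^ (-A) * (∫ s in (0:ℝ)..(t/2), (1 + s) ^ (-γ/2))
      ≤ (1 + t) ^ (-A) * ((1 + t) ^ (1 - b) / (1 - b)) := by
        apply mul_le_mul_of_nonneg_left hbound (Real.rpow_nonneg (by linarith) _)
    _ = (1 + t) ^ (-A + (1 - b)) / (1 - b) := by
        rw [← mul_div_assoc, ← Real.rpow_add (by linarith)]
    _ ≤ (1 + t) ^ (-(γ/2)) / (1 - b) := by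
        apply div_le_div_of_nonneg_right ?_ (by linarith) |>.trans_eq rfl
        exact Real.rpow_le_rpow_of_exponent_le h1t (by linarith)
    _ = 1/(1-b) * (1 + t) ^ (-γ/2) := by rw [neg_div]; ring
end

section
/- Let p > 1, α > 0, C > 0, D > 0 and ε > 0 be real numbers, and let T₀ > 0 be finite. Suppose G : [0, T₀) → ℝ is continuous and nonnegative, G(0) ≤ C·ε, G(T) ≤ C·ε + D·(1+T)^α·G(T)^p for every T ∈ [0, T₀), and sup_{T ∈ [0,T₀)} G(T) > 2C·ε. Then 1 + T₀ ≥ (2^p·D·C^{p−1})^{−1/α}·ε^{−(p−1)/α}. -/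
/-- Continuity (bootstrap) lemma for the lifespan lower bound: if `G` is
continuous and nonnegative on `[0, T₀)`, `G(0) ≤ Cε`,
`G(T) ≤ Cε + D(1+T)^α G(T)^p` on `[0, T₀)`, and `G` exceeds `2Cε` somewhere on
`[0, T₀)`, then `1 + T₀ ≥ (2^p D C^{p-1})^{-1/α} ε^{-(p-1)/α}`. -/
theorem stmt_19 (p α C D ε T₀ : ℝ) (hp : 1 < p) (hα : 0 < α) (hC : 0 < C)
    (hD : 0 < D) (hε : 0 < ε) (hT₀ : 0 < T₀) (G : ℝ → ℝ)
    (hGcont : ContinuousOn G (Set.Ico 0 T₀))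
    (hGnonneg : ∀ T ∈ Set.Ico (0 : ℝ) T₀, 0 ≤ G T)
    (hG0 : G 0 ≤ C * ε)
    (hGineq : ∀ T ∈ Set.Ico (0 : ℝ) T₀, G T ≤ C * ε + D * (1 + T) ^ α * (G T) ^ p)
    (hGbig : ∃ T ∈ Set.Ico (0 : ℝ) T₀, 2 * C * ε < G T) :
    (2 ^ p * D * C ^ (p - 1)) ^ (-1/α) * ε ^ (-(p - 1)/α) ≤ 1 + T₀ := by
  obtain ⟨T', hT'mem, hT'big⟩ := hGbig
  obtain ⟨hT'0, hT'lt⟩ := hT'mem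
  have hsub : Set.Icc (0:ℝ) T' ⊆ Set.Ico 0 T₀ := fun x hx =>
    ⟨hx.1, lt_of_le_of_lt hx.2 hT'lt⟩
  have hCε : 0 < C * ε := mul_pos hC hε
  -- intermediate value: find T* with G T* = 2Cε
  have hIVT := intermediate_value_Icc hT'0 (hGcont.mono hsub)
  have hmem : 2 * C * ε ∈ Set.Icc (G 0) (G T') := by
    constructor
    · nlinarith
    · exact hT'big.le
  obtain ⟨Ts, hTs, hGTs⟩ := hIVT hmem
  have hTsmem : Ts ∈ Set.Ico (0:ℝ) T₀ := hsub hTs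
  have hTs0 : (0:ℝ) ≤ Ts := hTs.1
  have h1Ts : (0:ℝ) < 1 + Ts := by linarith
  set K := 2 ^ p * D * C ^ (p - 1) * ε ^ (p - 1) with hK
  have hKpos : 0 < K := by positivity
  -- key inequality from hGineq at Ts
  have hineq := hGineq Ts hTsmem
  rw [hGTs] at hineq
  have heq : D * (1 + Ts) ^ α * (2 * C * ε) ^ p = C * ε * (K * (1 + Ts) ^ α) := by
    have h2 : (2 * C * ε) ^ p = 2 ^ p * C ^ p * ε ^ p := by
      rw [Real.mul_rpow (by positivity) hε.le, Real.mul_rpow (by norm_num) hC.le]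
    have hCp : C * C ^ (p - 1) = C ^ p := by
      rw [Real.rpow_sub hC, Real.rpow_one]; field_simp
    have hεp : ε * ε ^ (p - 1) = ε ^ p := by
      rw [Real.rpow_sub hε, Real.rpow_one]; field_simp
    rw [h2, hK, ← hCp, ← hεp]
    ring
  rw [heq] at hineq
  have hkey : 1 ≤ K * (1 + Ts) ^ α := by
    have : C * ε * 1 ≤ C * ε * (K * (1 + Ts) ^ α) := by linarith
    exact le_of_mul_le_mul_left (by linarith) hCε
  -- K⁻¹ ≤ (1+Ts)^α
  have hinv : K ^ (-(1:ℝ)) ≤ (1 + Ts) ^ α := by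
    rw [Real.rpow_neg_one]
    rw [inv_le_iff_one_le_mul₀ hKpos]
    linarith [hkey]
  have hmono : (K ^ (-(1:ℝ))) ^ (1/α) ≤ ((1 + Ts) ^ α) ^ (1/α) :=
    Real.rpow_le_rpow (by positivity) hinv (by positivity)
  have hleft : (K ^ (-(1:ℝ))) ^ (1/α) = K ^ (-1/α) := by
    rw [← Real.rpow_mul hKpos.le]
    ring_nf
  have hright : ((1 + Ts) ^ α) ^ (1/α) = 1 + Ts := by
    rw [← Real.rpow_mul h1Ts.le, mul_one_div, div_self hα.ne', Real.rpow_one]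
  rw [hleft, hright] at hmono
  -- rewrite the goal LHS as K ^ (-1/α)
  have hgoal : (2 ^ p * D * C ^ (p - 1)) ^ (-1/α) * ε ^ (-(p - 1)/α) = K ^ (-1/α) := by
    have h3 : (2 ^ p * D * C ^ (p - 1) * ε ^ (p - 1)) ^ (-1/α)
        = (2 ^ p * D * C ^ (p - 1)) ^ (-1/α) * (ε ^ (p - 1)) ^ (-1/α) :=
      Real.mul_rpow (by positivity) (by positivity)
    have h4 : (ε ^ (p - 1)) ^ (-1/α) = ε ^ (-(p - 1)/α) := by
      rw [← Real.rpow_mul hε.le]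
      congr 1
      ring
    rw [hK, h3, h4]
  rw [hgoal]
  have : 1 + Ts ≤ 1 + T₀ := by linarith [hTsmem.2]
  linarith
end
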